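/- A frame Φ = (φ₁, ..., φₙ) in ℂᵈ defines injective phase retrieval measurements (i.e., for all x, y ∈ ℂᵈ, if φₖ* x x* φₖ = φₖ* y y* φₖ for all k then x x* = y y*) if and only if the real linear space L_Φ = {Q Hermitian d×d : φₖ* Q φₖ = 0 for all k} contains no nonzero Hermitian matrix of rank at most 2. -/

import Mathlib

/-
Equal measurements of x and y say exactly that x x* − y y*, a Hermitian matrix of rank at most 2,
is annihilated by every φₖ* (·) φₖ; this gives one direction. For the other, the spectral theorem
shows that a Hermitian matrix Q of rank at most 2 is positive semidefinite, negative semidefinite,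
or of the form x x* − y y*. In the last case injectivity gives Q = 0 at once. In the semidefinite
cases φₖ* Q φₖ = 0 forces Q φₖ = 0, while injectivity (compared with y = 0) shows that the φₖ
span ℂᵈ, so again Q = 0.
-/

open Matrix
open scoped ComplexOrder

namespace Matrix

variable {𝕜 n : Type*} [RCLike 𝕜]

theorem rank_sub_le [Fintype n] {K : Type*} [Field K] (A B : Matrix n n K) :
    (A - B).rank ≤ A.rank + B.rank := by
  have hrange : LinearMap.range (A - B).mulVecLin
      ≤ LinearMap.range A.mulVecLin ⊔ LinearMap.range B.mulVecLin := by
    rintro _ ⟨v, rfl⟩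
    rw [mulVecLin_apply, sub_mulVec]
    exact Submodule.sub_mem _ (Submodule.mem_sup_left ⟨v, rfl⟩) (Submodule.mem_sup_right ⟨v, rfl⟩)
  exact (Submodule.finrank_mono hrange).trans (Submodule.finrank_add_le_finrank_add_finrank _ _)

theorem vecMulVec_ofReal_sqrt_smul_self_star {t : ℝ} (ht : 0 ≤ t) (u : n → 𝕜) :
    vecMulVec ((√t : 𝕜) • u) (star ((√t : 𝕜) • u)) = t • vecMulVec u (star u) := by
  rw [star_smul, RCLike.star_def, RCLike.conj_ofReal, smul_vecMulVec, vecMulVec_smul, smul_smul,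
    ← RCLike.ofReal_mul, Real.mul_self_sqrt ht, RCLike.real_smul_eq_coe_smul (K := 𝕜)]

variable [Fintype n]

theorem posSemidef_sum_smul_vecMulVec_self_star {ι : Type*} (s : Finset ι) {c : ι → ℝ}
    (hc : ∀ i ∈ s, 0 ≤ c i) (u : ι → n → 𝕜) :
    (∑ i ∈ s, c i • vecMulVec (u i) (star (u i))).PosSemidef :=
  posSemidef_sum s fun i hi => (posSemidef_vecMulVec_self_star (u i)).smul (hc i hi)

variable [DecidableEq n] {A : Matrix n n 𝕜}

theorem IsHermitian.eq_sum_eigenvalues_smul_vecMulVec (hA : A.IsHermitian) :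
    A = ∑ i, hA.eigenvalues i •
      vecMulVec ⇑(hA.eigenvectorBasis i) (star ⇑(hA.eigenvectorBasis i)) := by
  conv_lhs => rw [hA.spectral_theorem]
  ext a b
  simp only [Unitary.conjStarAlgAut_apply, mul_apply, eigenvectorUnitary_apply, diagonal_apply,
    Function.comp_apply, mul_ite, mul_zero, Finset.sum_ite_eq', Finset.mem_univ, ↓reduceIte,
    star_apply, RCLike.star_def, sum_apply, smul_apply, vecMulVec_apply, Pi.star_apply,
    RCLike.real_smul_eq_coe_mul]
  exact Finset.sum_congr rfl fun _ _ => by ring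

theorem IsHermitian.eigenvalues_eq_zero_of_rank_le_two (hA : A.IsHermitian) (hr : A.rank ≤ 2)
    {p q i : n} (hp : hA.eigenvalues p ≠ 0) (hq : hA.eigenvalues q ≠ 0) (hpq : p ≠ q)
    (hip : i ≠ p) (hiq : i ≠ q) : hA.eigenvalues i = 0 := by
  by_contra hi
  have hsub : {p, q, i} ⊆ Finset.univ.filter (hA.eigenvalues · ≠ 0) := by
    simp [Finset.insert_subset_iff, hp, hq, hi]
  have hcard := Finset.card_le_card hsub
  rw [Finset.card_insert_of_notMem (by simp [hpq, hip.symm]),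
    Finset.card_insert_of_notMem (by simp [hiq.symm]), Finset.card_singleton,
    ← Fintype.card_subtype, ← hA.rank_eq_card_non_zero_eigs] at hcard
  omega

theorem IsHermitian.posSemidef_or_neg_posSemidef_or_eq_sub_of_rank_le_two (hA : A.IsHermitian)
    (hr : A.rank ≤ 2) :
    A.PosSemidef ∨ (-A).PosSemidef ∨
      ∃ x y : n → 𝕜, A = vecMulVec x (star x) - vecMulVec y (star y) := by
  set u := fun i => ⇑(hA.eigenvectorBasis i)
  set μ := hA.eigenvalues
  have hA_sum : A = ∑ i, μ i • vecMulVec (u i) (star (u i)) :=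
    hA.eq_sum_eigenvalues_smul_vecMulVec
  by_cases hnonneg : ∀ i, 0 ≤ μ i
  · exact .inl (hA_sum ▸ posSemidef_sum_smul_vecMulVec_self_star _ (fun i _ => hnonneg i) u)
  by_cases hnonpos : ∀ i, μ i ≤ 0
  · refine .inr (.inl ?_)
    rw [hA_sum, ← Finset.sum_neg_distrib]
    simp_rw [← neg_smul]
    exact posSemidef_sum_smul_vecMulVec_self_star _ (fun i _ => neg_nonneg.mpr (hnonpos i)) u
  push Not at hnonneg hnonpos
  obtain ⟨q, hq⟩ := hnonneg
  obtain ⟨p, hp⟩ := hnonpos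
  have hpq : p ≠ q := by rintro rfl; linarith
  refine .inr (.inr ⟨(√(μ p) : 𝕜) • u p, (√(-μ q) : 𝕜) • u q, ?_⟩)
  rw [vecMulVec_ofReal_sqrt_smul_self_star hp.le,
    vecMulVec_ofReal_sqrt_smul_self_star (neg_nonneg.mpr hq.le), neg_smul, sub_neg_eq_add, hA_sum]
  refine Fintype.sum_eq_add p q hpq fun i ⟨hip, hiq⟩ => ?_
  have hμi : μ i = 0 := hA.eigenvalues_eq_zero_of_rank_le_two hr hp.ne' hq.ne hpq hip hiq
  rw [hμi, zero_smul]

end Matrix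

variable {𝕜 n ι : Type*} [RCLike 𝕜] [Fintype n]

def IsPhaseRetrievable (φ : ι → n → 𝕜) : Prop :=
  ∀ x y : n → 𝕜,
    (∀ k, star (φ k) ⬝ᵥ vecMulVec x (star x) *ᵥ φ k = star (φ k) ⬝ᵥ vecMulVec y (star y) *ᵥ φ k) →
      vecMulVec x (star x) = vecMulVec y (star y)

namespace IsPhaseRetrievable

variable {φ : ι → n → 𝕜}

theorem eq_zero_of_forall_star_dotProduct_eq_zero (hφ : IsPhaseRetrievable φ) {x : n → 𝕜}
    (hx : ∀ k, star x ⬝ᵥ φ k = 0) : x = 0 := by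
  have hxx := hφ x 0 fun k => by simp [vecMulVec_mulVec, hx k]
  simpa using hxx

theorem eq_zero_of_posSemidef (hφ : IsPhaseRetrievable φ) {A : Matrix n n 𝕜} (hA : A.PosSemidef)
    (hmeas : ∀ k, star (φ k) ⬝ᵥ A *ᵥ φ k = 0) : A = 0 := by
  have hAφ : ∀ k, A *ᵥ φ k = 0 := fun k => (hA.dotProduct_mulVec_zero_iff _).mp (hmeas k)
  refine ext_iff_mulVec.mpr fun v => ?_
  rw [zero_mulVec]
  refine hφ.eq_zero_of_forall_star_dotProduct_eq_zero fun k => ?_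
  rw [star_mulVec, ← dotProduct_mulVec, hA.1.eq, hAφ k, dotProduct_zero]

theorem eq_zero_of_isHermitian_of_rank_le_two [DecidableEq n] (hφ : IsPhaseRetrievable φ)
    {A : Matrix n n 𝕜} (hA : A.IsHermitian) (hmeas : ∀ k, star (φ k) ⬝ᵥ A *ᵥ φ k = 0)
    (hr : A.rank ≤ 2) : A = 0 := by
  rcases hA.posSemidef_or_neg_posSemidef_or_eq_sub_of_rank_le_two hr with hpos | hneg | ⟨x, y, rfl⟩
  · exact hφ.eq_zero_of_posSemidef hpos hmeas
  · exact neg_eq_zero.mp (hφ.eq_zero_of_posSemidef hneg (by simpa [neg_mulVec] using hmeas))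
  · refine sub_eq_zero.mpr (hφ x y fun k => sub_eq_zero.mp ?_)
    rw [← dotProduct_sub, ← sub_mulVec, hmeas k]

end IsPhaseRetrievable

theorem frame_injective_iff_no_low_rank_hermitian
    (d n : ℕ) (φ : Fin n → (Fin d → ℂ)) :
    (∀ x y : Fin d → ℂ,
        (∀ k, star (φ k) ⬝ᵥ (vecMulVec x (star x)).mulVec (φ k) =
              star (φ k) ⬝ᵥ (vecMulVec y (star y)).mulVec (φ k)) →
        vecMulVec x (star x) = vecMulVec y (star y)) ↔
    (∀ Q : Matrix (Fin d) (Fin d) ℂ, Q.IsHermitian →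
        (∀ k, star (φ k) ⬝ᵥ Q.mulVec (φ k) = 0) → Q.rank ≤ 2 → Q = 0) := by
  refine ⟨fun hφ _ hQ hmeas hr =>
      IsPhaseRetrievable.eq_zero_of_isHermitian_of_rank_le_two hφ hQ hmeas hr,
    fun h x y hxy => sub_eq_zero.mp (h _ ?_ ?_ ?_)⟩
  · exact (posSemidef_vecMulVec_self_star x).isHermitian.sub
      (posSemidef_vecMulVec_self_star y).isHermitian
  · intro k
    rw [sub_mulVec, dotProduct_sub, hxy k, sub_self]
  · exact (rank_sub_le _ _).trans (add_le_add (rank_vecMulVec_le _ _) (rank_vecMulVec_le _ _))
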